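/- The ℤ([2]×P)-grading on the polynomial ring B(2,P) is positive: the only elements of B(2,P) of degree 0 are the constants in k. -/
import Mathlib


open scoped Classical

noncomputable section

namespace LP2

variable (k : Type) [Field k] (P : Type) [Fintype P] [PartialOrder P]
variable (root : P) (parent : P → P)

/-- Index set for the `u`-variables: `none` is `u_{∅,ρ}`, and `some ⟨(q,p),_⟩` is
`u_{q,p}` for the pairs `(q,p)` such that the meet of `q` and `p` is the parent of `p`
(in a tree order this means `parent p ≤ q` and `¬ p ≤ q`). -/
abbrev UPair : Type := {qp : P × P // qp.2 ≠ root ∧ parent qp.2 ≤ qp.1 ∧ ¬ qp.2 ≤ qp.1}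

/-- The variables of the ring `B(2,P)`. -/
abbrev Vars : Type := (Fin 2 × P) ⊕ (Option (UPair P root parent))

/-- The ring `B(2,P) = B ⊗_k k[x_{[2]×P}]`. -/
abbrev BR := MvPolynomial (Vars P root parent) k

/-- The variable `p₁ = x_{1,p}`. -/
def x1 (p : P) : BR k P root parent := MvPolynomial.X (Sum.inl ((0 : Fin 2), p))

/-- The variable `p₂ = x_{2,p}`. -/
def x2 (p : P) : BR k P root parent := MvPolynomial.X (Sum.inl ((1 : Fin 2), p))

/-- The variable `u_{∅,ρ}`. -/
def u0 : BR k P root parent := MvPolynomial.X (Sum.inr none)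

/-- The variable `u_{q,p}` (and `0` if `(q,p)` is not a valid pair). -/
def uv (q p : P) : BR k P root parent :=
  if h : p ≠ root ∧ parent p ≤ q ∧ ¬ p ≤ q then
    MvPolynomial.X (Sum.inr (some ⟨(q, p), h⟩)) else 0

/-- `T_c(b) = - ∑_{q ≥ c} q₂ u_{q,b}`, for `c` a sibling of `b` distinct from `b`. -/
def Tc (c b : P) : BR k P root parent :=
  - ∑ q ∈ Finset.univ.filter (fun q => c ≤ q), x2 k P root parent q * uv k P root parent q b

/-- `T_a(b) = - a₂ u_{a,b}` where `a` is the parent of `b`. -/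
def Tpar (b : P) : BR k P root parent :=
  - x2 k P root parent (parent b) * uv k P root parent (parent b) b

/-- The set of siblings of `b` (including `b` itself). -/
def sib (b : P) : Finset P := Finset.univ.filter (fun c => c ≠ root ∧ parent c = parent b)

/-- `T(ρ) = u_{∅,ρ}` and `T(b) = -T_a(b) - ∑_{c sibling of b, c ≠ b} T_c(b)`. -/
def T (b : P) : BR k P root parent :=
  if b = root then u0 k P root parent
  else - Tpar k P root parent b - ∑ c ∈ (sib P root parent b).erase b, Tc k P root parent c b

/-- The set of children of `a`. -/
def children (a : P) : Finset P := Finset.univ.filter (fun b => b ≠ root ∧ parent b = a)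

/-- The symbol `S_cT_c(b)`:  it is `b₁` if `c = b`, `-u_{c,b}` if `c` is the parent of `b`,
and `S_c(T_c(b)) = - ∑_{q ≥ c} S_c(q₂) u_{q,b}` if `c` is a sibling of `b` distinct from `b`. -/
def ST (Sx : P → P → BR k P root parent) (c b : P) : BR k P root parent :=
  if c = b then x1 k P root parent b
  else if c = parent b then - uv k P root parent c b
  else - ∑ q ∈ Finset.univ.filter (fun q => c ≤ q), Sx c q * uv k P root parent q b

/-- The data of the recursively defined elements `D(a)^x` and `S_a(b₂)` of `B(2,P)`,
pinned down by their defining equations.  `hD` says: for any enumeration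
`a = e 0, e 1, …` of `a` together with its children `e 1, …, e m`, the element
`D(a)^{e i}` is the signed maximal minor `(-1)^i |M(a)^{e i}|` of the `m × (m+1)` matrix
`M(a) = [S_{e i}T_{e i}(e (j+1))]`.  (For `a` maximal this gives `D(a)^a = 1`.)
`hSx` says: along any saturated chain `a = c 0 ⋖ c 1 ⋖ ⋯ ⋖ c n = b`,
`S_a(b₂) = R(a,b) D(b)^b` where `R(a,b) = ∏ D(c i)^{c (i+1)}`. -/
structure DefData where
  D : P → P → BR k P root parent
  Sx : P → P → BR k P root parent
  hD : ∀ (a : P) (m : ℕ) (e : Fin (m+1) → P), Function.Injective e → e 0 = a →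
      (∀ j : Fin m, e j.succ ∈ children P root parent a) →
      (∀ b ∈ children P root parent a, ∃ j : Fin m, e j.succ = b) →
      ∀ i : Fin (m+1),
        D a (e i) = (-1 : BR k P root parent) ^ (i : ℕ) *
          Matrix.det (Matrix.of fun (j l : Fin m) =>
            ST k P root parent Sx (e (i.succAbove l)) (e j.succ))
  hSx : ∀ (n : ℕ) (c : Fin (n+1) → P),
      (∀ i : Fin n, c i.castSucc ⋖ c i.succ) →
      Sx (c 0) (c (Fin.last n)) =
        (∏ i : Fin n, D (c i.castSucc) (c i.succ)) * D (c (Fin.last n)) (c (Fin.last n))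

/-- The ideal `J(2,P)`, generated by the deformations `p₁q₂ - T(p)S_p(q₂)` for `p ≤ q`. -/
def Jideal (dd : DefData k P root parent) : Ideal (BR k P root parent) :=
  Ideal.span {f | ∃ p q : P, p ≤ q ∧
    f = x1 k P root parent p * x2 k P root parent q - T k P root parent p * dd.Sx p q}


/-- The grading group `ℤ([2]×P)`, the free abelian group on the symbols `p₁, p₂`, `p ∈ P`. -/
abbrev Adeg : Type := (Fin 2 × P) →₀ ℤ

/-- `p̂ = p₂ - b¹₁ - ⋯ - bᵐ₁`, where `b¹,…,bᵐ` are the children of `p`. -/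
def phat (p : P) : Adeg P :=
  Finsupp.single ((1 : Fin 2), p) 1 -
    ∑ b ∈ children P root parent p, Finsupp.single ((0 : Fin 2), b) 1

/-- The `ℤ([2]×P)`-grading of `B(2,P)`: the variable `pᵢ` has degree `pᵢ`,
`u_{q,p}` has degree `p₁ - q₂ + p̂`, and `u_{∅,ρ}` has degree `ρ₁ + ρ̂`. -/
def wt : Vars P root parent → Adeg P
  | Sum.inl ip => Finsupp.single ip 1
  | Sum.inr none => Finsupp.single ((0 : Fin 2), root) 1 + phat P root parent root
  | Sum.inr (some qp) =>
      Finsupp.single ((0 : Fin 2), qp.val.2) 1 - Finsupp.single ((1 : Fin 2), qp.val.1) 1 +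
        phat P root parent qp.val.2

/-- The size of the subtree above `p`. -/
def hsz (p : P) : ℕ := (Finset.univ.filter (fun q => p ≤ q)).card

/-- A positive linear functional on the degree group. -/
def lam : Adeg P →ₗ[ℤ] ℤ :=
  Finsupp.linearCombination ℤ (fun ip : Fin 2 × P => if ip.1 = 0 then (hsz P ip.2 : ℤ) else 1)

lemma lam_single (ip : Fin 2 × P) (n : ℤ) :
    lam P (Finsupp.single ip n) = n * (if ip.1 = 0 then (hsz P ip.2 : ℤ) else 1) := by
  simp [lam, Finsupp.linearCombination_single, smul_eq_mul]

lemma hsz_pos (p : P) : 1 ≤ hsz P p := by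
  have : p ∈ Finset.univ.filter (fun q => p ≤ q) := by simp
  exact Finset.card_pos.mpr ⟨p, this⟩

lemma mem_children_lt {a b : P}
    (hpar : ∀ p : P, p ≠ root → parent p ⋖ p)
    (hb : b ∈ children P root parent a) : a ⋖ b := by
  simp only [children, Finset.mem_filter, Finset.mem_univ, true_and] at hb
  have := hpar b hb.1
  rwa [hb.2] at this

lemma sum_children_hsz
    (htree : ∀ b : P, IsChain (· ≤ ·) {a : P | a ≤ b})
    (hpar : ∀ p : P, p ≠ root → parent p ⋖ p) (p : P) :
    ∑ b ∈ children P root parent p, hsz P b + 1 ≤ hsz P p := by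
  classical
  set C := children P root parent p with hC
  set S : P → Finset P := fun b => Finset.univ.filter (fun q => b ≤ q) with hS
  have hdisj : (C : Set P).PairwiseDisjoint S := by
    intro b hb c hc hbc
    refine Finset.disjoint_left.mpr ?_
    intro q hq hq'
    simp only [hS, Finset.mem_filter, Finset.mem_univ, true_and] at hq hq'
    have hcb : b ≤ c ∨ c ≤ b := by
      rcases eq_or_ne b c with h | h
      · exact Or.inl h.le
      · exact htree q (Set.mem_setOf_eq ▸ hq) (Set.mem_setOf_eq ▸ hq') h
    have hpb := mem_children_lt P root parent hpar hb
    have hpc := mem_children_lt P root parent hpar hc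
    rcases hcb with h | h
    · rcases lt_or_eq_of_le h with h | h
      · exact hpc.2 hpb.1 h
      · exact hbc h
    · rcases lt_or_eq_of_le h with h | h
      · exact hpb.2 hpc.1 h
      · exact hbc h.symm
  have hsub : C.biUnion S ⊆ (Finset.univ.filter (fun q => p ≤ q)).erase p := by
    intro q hq
    rcases Finset.mem_biUnion.mp hq with ⟨b, hb, hqb⟩
    simp only [hS, Finset.mem_filter, Finset.mem_univ, true_and] at hqb
    have hpb := mem_children_lt P root parent hpar hb
    refine Finset.mem_erase.mpr ⟨?_, by simp [le_trans hpb.1.le hqb]⟩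
    intro hqp
    exact absurd (hqp ▸ hqb) (not_le_of_gt hpb.1)
  have hcard : ∑ b ∈ C, hsz P b = (C.biUnion S).card := by
    rw [Finset.card_biUnion]
    · rfl
    · intro b hb c hc hbc
      exact hdisj hb hc hbc
  have h1 : (C.biUnion S).card ≤ ((Finset.univ.filter (fun q => p ≤ q)).erase p).card :=
    Finset.card_le_card hsub
  have h2 : ((Finset.univ.filter (fun q => p ≤ q)).erase p).card
      = hsz P p - 1 := by
    rw [Finset.card_erase_of_mem (by simp)]
    rfl
  have h3 := hsz_pos P p
  omega

lemma lam_phat_ge (htree : ∀ b : P, IsChain (· ≤ ·) {a : P | a ≤ b})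
    (hpar : ∀ p : P, p ≠ root → parent p ⋖ p) (p : P) :
    (hsz P p : ℤ) + lam P (phat P root parent p) ≥ 2 := by
  have hsum := sum_children_hsz P root parent htree hpar p
  have : lam P (phat P root parent p)
      = 1 - ∑ b ∈ children P root parent p, (hsz P b : ℤ) := by
    rw [phat, map_sub, map_sum, lam_single]
    simp only [lam_single]
    norm_num
  rw [this]
  push_cast
  have : (∑ b ∈ children P root parent p, (hsz P b : ℤ))
      = ((∑ b ∈ children P root parent p, hsz P b : ℕ) : ℤ) := by push_cast; ring
  rw [this]
  have := hsum
  omega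

lemma lam_wt_pos (htree : ∀ b : P, IsChain (· ≤ ·) {a : P | a ≤ b})
    (hpar : ∀ p : P, p ≠ root → parent p ⋖ p) (v : Vars P root parent) :
    1 ≤ lam P (wt P root parent v) := by
  cases v with
  | inl ip =>
      rw [wt, lam_single]
      have := hsz_pos P ip.2
      split <;> omega
  | inr o =>
      cases o with
      | none =>
          have hph := lam_phat_ge P root parent htree hpar root
          rw [wt, map_add, lam_single]
          rw [if_pos (show ((0 : Fin 2), root).1 = 0 from rfl),
            show ((0 : Fin 2), root).2 = root from rfl]
          omega
      | some qp =>
          have hph := lam_phat_ge P root parent htree hpar qp.val.2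
          rw [wt, map_add, map_sub, lam_single, lam_single]
          norm_num
          omega

/-- The `ℤ([2]×P)`-grading on the polynomial ring `B(2,P)` is
positive: the only elements of degree `0` are the constants in `k`. -/
theorem grading_positive
    (hroot : ∀ p : P, root ≤ p)
    (htree : ∀ b : P, IsChain (· ≤ ·) {a : P | a ≤ b})
    (hpar : ∀ p : P, p ≠ root → parent p ⋖ p) :
    ∀ f : BR k P root parent,
      MvPolynomial.IsWeightedHomogeneous (wt P root parent) f (0 : Adeg P) →
      ∃ c : k, f = MvPolynomial.C c := by
  intro f hf
  refine ⟨MvPolynomial.coeff 0 f, ?_⟩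
  have key : ∀ d : Vars P root parent →₀ ℕ, MvPolynomial.coeff d f ≠ 0 → d = 0 := by
    intro d hd
    have hdeg := hf hd
    have h0 : lam P (Finsupp.weight (wt P root parent) d) = 0 := by
      rw [hdeg]; exact map_zero _
    rw [Finsupp.weight_apply, map_finsuppSum] at h0
    have hterm : ∀ v ∈ d.support,
        lam P ((d v) • wt P root parent v) = (d v : ℤ) * lam P (wt P root parent v) := by
      intro v _
      rw [← Nat.cast_smul_eq_nsmul ℤ, map_smul, smul_eq_mul]
    rw [Finsupp.sum, Finset.sum_congr rfl hterm] at h0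
    have hnn : ∀ v ∈ d.support, (0 : ℤ) ≤ (d v : ℤ) * lam P (wt P root parent v) := by
      intro v _
      exact mul_nonneg (Int.natCast_nonneg _)
        (le_trans zero_le_one (lam_wt_pos P root parent htree hpar v))
    have hzero := (Finset.sum_eq_zero_iff_of_nonneg hnn).mp h0
    ext v
    by_contra hv
    have hvs : v ∈ d.support := Finsupp.mem_support_iff.mpr (by simpa using hv)
    have := hzero v hvs
    have h1 := lam_wt_pos P root parent htree hpar v
    have h2 : 1 ≤ (d v : ℤ) := by
      have : 1 ≤ d v := Nat.one_le_iff_ne_zero.mpr (by simpa using hv)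
      exact_mod_cast this
    nlinarith
  ext d
  rw [MvPolynomial.coeff_C]
  split_ifs with h
  · rw [← h]
  · by_contra hne
    exact h ((key d hne).symm)

end LP2
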